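/- arXiv:2303.00330 — 6 statements merged into one kernel-verified Lean document; each statement's English description precedes it below -/
import Mathlib

section
/- Let U = F_q^3 and let 𝓕 be the family of sets N(u) = {v ∈ F_q^3 : u·v = 1} for u ∈ F_q^3. Then the VC-dimension of the set system (U, 𝓕) is at most 3. -/
open scoped Classical

theorem stmt_2 {F : Type*} [Field F] [Fintype F] (S : Finset (Fin 3 → F))
    (hS : ∀ T ⊆ S, ∃ u : Fin 3 → F, S.filter (fun v => ∑ i, u i * v i = 1) = T) :
    S.card ≤ 3 := by
  by_contra h
  push_neg at h
  obtain ⟨T, hTS, hT4⟩ := S.exists_subset_card_eq (by omega : 4 ≤ S.card)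
  set e : Fin 4 ≃ T := (finCongr hT4.symm).trans T.equivFin.symm with he
  set v : Fin 4 → (Fin 3 → F) := fun i => (e i : Fin 3 → F) with hv
  have hvinj : Function.Injective v := fun a b hab => e.injective (Subtype.ext hab)
  have hvS : ∀ i, v i ∈ S := fun i => hTS (e i).2
  -- v is not linearly independent since 4 > 3 = finrank
  have hnli : ¬ LinearIndependent F v := by
    intro hli
    have := hli.fintype_card_le_finrank
    simp [Module.finrank_fin_fun] at this
  obtain ⟨g, hg0, i0, hgi0⟩ := Fintype.not_linearIndependent_iff.mp hnli
  -- key: for any u, ∑ i, g i * (u ⬝ v i) = 0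
  have key : ∀ u : Fin 3 → F, ∑ i, g i * (∑ j, u j * v i j) = 0 := by
    intro u
    have hj : ∀ j, ∑ i, g i * v i j = 0 := by
      intro j
      have := congrFun hg0 j
      simpa using this
    calc ∑ i, g i * (∑ j, u j * v i j)
        = ∑ j, u j * (∑ i, g i * v i j) := by
          simp_rw [Finset.mul_sum]
          rw [Finset.sum_comm]
          congr 1; ext i; congr 1; ext j; ring
      _ = 0 := by simp [hj]
  -- u0 : all points of S satisfy dot = 1
  obtain ⟨u0, hu0⟩ := hS S (subset_refl S)
  have hu0' : ∀ w ∈ S, ∑ j, u0 j * w j = 1 := by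
    intro w hw
    rw [← hu0] at hw
    exact (Finset.mem_filter.mp hw).2
  -- u1 : all points of S except v i0
  obtain ⟨u1, hu1⟩ := hS (S.erase (v i0)) (S.erase_subset _)
  have hu1' : ∀ i, i ≠ i0 → ∑ j, u1 j * v i j = 1 := by
    intro i hi
    have hmem : v i ∈ S.erase (v i0) :=
      Finset.mem_erase.mpr ⟨fun he => hi (hvinj he), hvS i⟩
    rw [← hu1] at hmem
    exact (Finset.mem_filter.mp hmem).2
  have hu1i0 : ∑ j, u1 j * v i0 j ≠ 1 := by
    intro he
    have : v i0 ∈ S.filter (fun v => ∑ j, u1 j * v j = 1) :=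
      Finset.mem_filter.mpr ⟨hvS i0, he⟩
    rw [hu1] at this
    exact (Finset.mem_erase.mp this).1 rfl
  -- sum of g over all i is 0
  have hsum0 : ∑ i, g i = 0 := by
    have := key u0
    calc ∑ i, g i = ∑ i, g i * (∑ j, u0 j * v i j) := by
          apply Finset.sum_congr rfl
          intro i _
          rw [hu0' (v i) (hvS i), mul_one]
      _ = 0 := this
  -- from u1
  have h1 : g i0 * (∑ j, u1 j * v i0 j) + ∑ i ∈ Finset.univ.erase i0, g i = 0 := by
    have := key u1
    rw [← Finset.add_sum_erase _ _ (Finset.mem_univ i0)] at this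
    calc g i0 * (∑ j, u1 j * v i0 j) + ∑ i ∈ Finset.univ.erase i0, g i
        = g i0 * (∑ j, u1 j * v i0 j) +
            ∑ i ∈ Finset.univ.erase i0, g i * (∑ j, u1 j * v i j) := by
          congr 1
          apply Finset.sum_congr rfl
          intro i hi
          rw [hu1' i (Finset.mem_erase.mp hi).1, mul_one]
      _ = 0 := this
  have h2 : ∑ i ∈ Finset.univ.erase i0, g i = -g i0 := by
    have h3 := Finset.add_sum_erase Finset.univ g (Finset.mem_univ i0)
    rw [hsum0] at h3
    linear_combination h3
  rw [h2] at h1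
  have : g i0 * ((∑ j, u1 j * v i0 j) - 1) = 0 := by linear_combination h1
  rcases mul_eq_zero.mp this with h | h
  · exact hgi0 h
  · exact hu1i0 (by linear_combination h)
end

section
/- Let L be a set of lines in F_q^2 of the form y = ax + b with a ≠ 0, and let A, B ⊆ F_q with P = A × B. Let L_x = {a : (y = ax + b) ∈ L}, and suppose |L||A| > q^α · max{|A|, |L_x|} for some α ∈ (0,1). Then I(A × B, L) ≤ C(|L||A||B|^{1/2}/q^{α/2} + q^α |L|^{1/2}|A|^{1/2}|B|^{1/2}) for an absolute constant C. -/
/-!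
Let `I` be the number of incidences and `T_l` the set of points of `A × B` on the line `l`, so that
`I = ∑_l |T_l|`. A line meets `A × B` in at most `|A|` points, and in at most `|B|` points since
its slope is nonzero; a point and a slope determine a line, so `I ≤ |A||B||L_x|`; and two points
determine a line, so Cauchy–Schwarz gives `I² ≤ |L| (|A|²|B|² + I)`, i.e.
`I ≤ |A||B||L|^{1/2} + |L|`. The hypothesis gives `q^α |L_x| ≤ |L||A|`.

Let `X` and `Y` be the two terms of the bound. If `|L|` dominates `|A||B||L|^{1/2}`, then
`I ≤ 2|L|` and `I |L| ≤ |L|²|A|²|B| / q^α = X²`, so `I ≤ 2X`. Otherwise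
`I⁶ ≤ (|L||A|)³ (|L||B|) (2|A||B||L|^{1/2})² = 4 (X²Y)²`, and `X²Y ≤ (X + Y)³` gives
`I ≤ 2(X + Y)`.
-/

open scoped Classical

open Finset

section
variable {R : Type*} [CommRing R]

noncomputable def lineIncidences (A B : Finset R) (L : Finset (R × R)) :
    Finset ((R × R) × (R × R)) :=
  ((A ×ˢ B) ×ˢ L).filter fun pl => pl.1.2 = pl.2.1 * pl.1.1 + pl.2.2

noncomputable def pointsOnLine (A B : Finset R) (l : R × R) : Finset (R × R) :=
  (A ×ˢ B).filter fun p => p.2 = l.1 * p.1 + l.2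

variable (A B : Finset R) (L : Finset (R × R))

theorem card_lineIncidences : #(lineIncidences A B L) = ∑ l ∈ L, #(pointsOnLine A B l) := by
  simp only [lineIncidences, pointsOnLine, card_filter, sum_product_right]

theorem card_pointsOnLine_le_card_left (l : R × R) : #(pointsOnLine A B l) ≤ #A := by
  refine card_le_card_of_injOn Prod.fst (fun p hp => ?_) fun p hp p' hp' hx => ?_
  · simp only [pointsOnLine, coe_filter, mem_product] at hp
    exact hp.1.1
  · simp only [pointsOnLine, coe_filter, mem_product, Set.mem_ofPred_eq] at hp hp'
    exact Prod.ext hx (by rw [hp.2, hp'.2, hx])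

theorem card_pointsOnLine_le_card_right [IsDomain R] {l : R × R} (hl : l.1 ≠ 0) :
    #(pointsOnLine A B l) ≤ #B := by
  refine card_le_card_of_injOn Prod.snd (fun p hp => ?_) fun p hp p' hp' hy => ?_
  · simp only [pointsOnLine, coe_filter, mem_product] at hp
    exact hp.1.2
  · simp only [pointsOnLine, coe_filter, mem_product, Set.mem_ofPred_eq] at hp hp'
    refine Prod.ext (mul_left_cancel₀ hl ?_) hy
    linear_combination hy - hp.2 + hp'.2

theorem card_lineIncidences_le_card_mul_card_left : #(lineIncidences A B L) ≤ #L * #A := by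
  rw [card_lineIncidences, ← smul_eq_mul]
  exact sum_le_card_nsmul _ _ _ fun l _ => card_pointsOnLine_le_card_left A B l

theorem card_lineIncidences_le_card_mul_card_right [IsDomain R] (hL : ∀ l ∈ L, l.1 ≠ 0) :
    #(lineIncidences A B L) ≤ #L * #B := by
  rw [card_lineIncidences, ← smul_eq_mul]
  exact sum_le_card_nsmul _ _ _ fun l hl => card_pointsOnLine_le_card_right A B (hL l hl)

theorem card_lineIncidences_le_mul_card_slopes :
    #(lineIncidences A B L) ≤ #A * #B * #(L.image Prod.fst) := by
  rw [← card_product, ← card_product]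
  refine card_le_card_of_injOn (fun pl => (pl.1, pl.2.1)) (fun pl hpl => ?_)
    fun pl hpl pl' hpl' h => ?_
  · simp only [lineIncidences, coe_filter, mem_product, Set.mem_ofPred_eq] at hpl
    simp only [coe_product, Set.mem_prod, mem_coe, mem_image]
    exact ⟨hpl.1.1, pl.2, hpl.1.2, rfl⟩
  · simp only [lineIncidences, coe_filter, mem_product, Set.mem_ofPred_eq] at hpl hpl'
    obtain ⟨hp, hslope⟩ := Prod.mk.inj h
    refine Prod.ext hp (Prod.ext hslope ?_)
    rw [hp, hslope] at hpl
    linear_combination hpl'.2 - hpl.2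

theorem line_eq_of_two_points [IsDomain R] {l l' p p' : R × R} (hne : p ≠ p')
    (hp : p.2 = l.1 * p.1 + l.2) (hp' : p'.2 = l.1 * p'.1 + l.2)
    (hq : p.2 = l'.1 * p.1 + l'.2) (hq' : p'.2 = l'.1 * p'.1 + l'.2) : l = l' := by
  have hx : p.1 ≠ p'.1 := fun hx => hne (Prod.ext hx (by rw [hp, hp', hx]))
  have hslope : l.1 = l'.1 := by
    have : (l.1 - l'.1) * (p.1 - p'.1) = 0 := by linear_combination hq - hq' - hp + hp'
    simpa [sub_eq_zero, hx] using this
  exact Prod.ext hslope (by rw [hslope] at hp; linear_combination hq - hp)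

theorem sum_card_offDiag_pointsOnLine_le [IsDomain R] :
    ∑ l ∈ L, #(pointsOnLine A B l).offDiag ≤ (#A * #B) ^ 2 := by
  rw [← card_sigma, sq, ← card_product, ← card_product]
  refine card_le_card_of_injOn Sigma.snd (fun x hx => ?_) ?_
  · simp only [coe_sigma, Set.mem_sigma_iff, mem_coe, mem_offDiag, pointsOnLine, mem_filter] at hx
    exact mem_product.2 ⟨hx.2.1.1, hx.2.2.1.1⟩
  · rintro ⟨l, p, p'⟩ hx ⟨l', q, q'⟩ hy h
    simp only [coe_sigma, Set.mem_sigma_iff, mem_coe, mem_offDiag, pointsOnLine,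
      mem_filter] at hx hy
    obtain ⟨rfl, rfl⟩ := Prod.mk.inj h
    obtain rfl := line_eq_of_two_points hx.2.2.2 hx.2.1.2 hx.2.2.1.2 hy.2.1.2 hy.2.2.1.2
    rfl

theorem sq_card_lineIncidences_le [IsDomain R] :
    #(lineIncidences A B L) ^ 2 ≤ #L * ((#A * #B) ^ 2 + #(lineIncidences A B L)) := by
  have hsq (s : Finset (R × R)) : #s ^ 2 = #s.offDiag + #s := by
    rw [offDiag_card, sq, Nat.sub_add_cancel (Nat.le_mul_self _)]
  calc #(lineIncidences A B L) ^ 2 = (∑ l ∈ L, #(pointsOnLine A B l)) ^ 2 := by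
        rw [card_lineIncidences]
    _ ≤ #L * ∑ l ∈ L, #(pointsOnLine A B l) ^ 2 := sq_sum_le_card_mul_sum_sq
    _ = #L * (∑ l ∈ L, #(pointsOnLine A B l).offDiag + #(lineIncidences A B L)) := by
        simp only [hsq, sum_add_distrib, card_lineIncidences]
    _ ≤ #L * ((#A * #B) ^ 2 + #(lineIncidences A B L)) := by
        gcongr; exact sum_card_offDiag_pointsOnLine_le A B L

end

theorem le_mul_sqrt_add_of_sq_le {K L P : ℝ} (hK : 0 ≤ K) (hL : 0 ≤ L) (hP : 0 ≤ P)
    (h : K ^ 2 ≤ L * (P ^ 2 + K)) : K ≤ P * √L + L := by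
  by_contra! h'
  have hs := Real.sq_sqrt hL
  have hs0 := Real.sqrt_nonneg L
  nlinarith [mul_nonneg hP hs0]

theorem le_two_mul_add_of_pow_six_le {I X Y : ℝ} (hI : 0 ≤ I) (hX : 0 ≤ X) (hY : 0 ≤ Y)
    (h : I ^ 6 ≤ 4 * (X ^ 2 * Y) ^ 2) : I ≤ 2 * (X + Y) := by
  have hXY : X ^ 2 * Y ≤ (X + Y) ^ 3 := by
    nlinarith [pow_nonneg hX 3, pow_nonneg hY 3, mul_nonneg (mul_nonneg hX hX) hY,
      mul_nonneg (mul_nonneg hX hY) hY]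
  refine (pow_le_pow_iff_left₀ hI (by positivity) (by norm_num : 6 ≠ 0)).1 (h.trans ?_)
  calc 4 * (X ^ 2 * Y) ^ 2 ≤ 4 * ((X + Y) ^ 3) ^ 2 := by gcongr
    _ ≤ (2 * (X + Y)) ^ 6 := by nlinarith [pow_nonneg (add_nonneg hX hY) 6]

theorem incidence_bound_of_elementary_bounds {I L A B Lx M : ℝ} (hI : 0 ≤ I) (hL : 0 ≤ L)
    (hA : 0 ≤ A) (hB : 0 ≤ B) (hM : 0 < M) (hLA : I ≤ L * A) (hLB : I ≤ L * B)
    (hslopes : I ≤ A * B * Lx) (hpairs : I ≤ A * B * √L + L) (hLx : M * Lx ≤ L * A) :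
    I ≤ 2 * (L * A * √B / √M + M * √(L * A * B)) := by
  set X := L * A * √B / √M
  set Y := M * √(L * A * B)
  have hX : 0 ≤ X := by positivity
  have hY : 0 ≤ Y := by positivity
  have hXM : X ^ 2 * M = (L * A) ^ 2 * B := by
    simp only [X, div_pow, mul_pow, Real.sq_sqrt hB, Real.sq_sqrt hM.le]
    field_simp
  rcases le_total (A * B * √L) L with hlines | hpoints
  · have hIL : I * L ≤ X ^ 2 := by
      refine le_of_mul_le_mul_right ?_ hM
      calc I * L * M = L * (I * M) := by ring
        _ ≤ L * (A * B * Lx * M) := by gcongr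
        _ = L * (A * B) * (M * Lx) := by ring
        _ ≤ L * (A * B) * (L * A) := by gcongr
        _ = X ^ 2 * M := by rw [hXM]; ring
    have hsq : I ^ 2 ≤ (2 * X) ^ 2 := by nlinarith
    linarith [(pow_le_pow_iff_left₀ hI (by positivity) two_ne_zero).1 hsq]
  · have hX2Y : (X ^ 2 * Y) ^ 2 = ((L * A) ^ 2 * B) ^ 2 * (L * A * B) := by
      have hY2 : Y ^ 2 = M ^ 2 * (L * A * B) := by
        rw [mul_pow, Real.sq_sqrt (by positivity)]
      refine mul_right_cancel₀ (pow_ne_zero 2 hM.ne') ?_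
      calc (X ^ 2 * Y) ^ 2 * M ^ 2 = (X ^ 2 * M) ^ 2 * Y ^ 2 := by ring
        _ = _ := by rw [hXM, hY2]; ring
    refine le_two_mul_add_of_pow_six_le hI hX hY ?_
    calc I ^ 6 = I ^ 3 * I * I ^ 2 := by ring
      _ ≤ (L * A) ^ 3 * (L * B) * (2 * (A * B * √L)) ^ 2 := by gcongr; linarith
      _ = 4 * (X ^ 2 * Y) ^ 2 := by simp only [hX2Y, mul_pow, Real.sq_sqrt hL]; ring

theorem stmt_6 : ∃ C : ℝ, 0 < C ∧
    ∀ (F : Type) [Field F] [Fintype F], ∀ (A B : Finset F) (L : Finset (F × F)) (α : ℝ),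
      (∀ l ∈ L, l.1 ≠ 0) → 0 < α → α < 1 →
      (Fintype.card F : ℝ) ^ α * max (A.card : ℝ) ((L.image Prod.fst).card : ℝ) <
        (L.card : ℝ) * (A.card : ℝ) →
      ((((A ×ˢ B) ×ˢ L).filter fun pl => pl.1.2 = pl.2.1 * pl.1.1 + pl.2.2).card : ℝ) ≤
        C * ((L.card : ℝ) * (A.card : ℝ) * Real.sqrt B.card / (Fintype.card F : ℝ) ^ (α / 2)
          + (Fintype.card F : ℝ) ^ α *
            Real.sqrt ((L.card : ℝ) * (A.card : ℝ) * (B.card : ℝ))) := by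
  refine ⟨2, two_pos, fun F _ _ A B L α hL _ _ hsize => ?_⟩
  have hq : (0 : ℝ) < Fintype.card F := mod_cast Fintype.card_pos
  have hsqrt : (Fintype.card F : ℝ) ^ (α / 2) = √((Fintype.card F : ℝ) ^ α) := by
    rw [Real.sqrt_eq_rpow, ← Real.rpow_mul hq.le, div_eq_mul_one_div]
  have hpairs := sq_card_lineIncidences_le A B L
  change (#(lineIncidences A B L) : ℝ) ≤ _
  rw [hsqrt]
  refine incidence_bound_of_elementary_bounds (by positivity) (by positivity) (by positivity)
    (by positivity) (by positivity) (mod_cast card_lineIncidences_le_card_mul_card_left A B L)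
    (mod_cast card_lineIncidences_le_card_mul_card_right A B L hL)
    (mod_cast card_lineIncidences_le_mul_card_slopes A B L)
    (le_mul_sqrt_add_of_sq_le (by positivity) (by positivity) (by positivity) (mod_cast hpairs))
    ((mul_le_mul_of_nonneg_left (le_max_right _ _) (by positivity)).trans hsize.le)
end

section
/- Let U ⊆ F_q^3 with |U| ≥ 8q^2. Then the set L = {u ∈ U : #{u' ∈ U : u·u' = 1} ≥ 2|U|/q} satisfies |L| ≤ q^2/2 ≤ |U|/16. -/
open scoped Classical

theorem stmt_8 {F : Type*} [Field F] [Fintype F] (q : ℕ) (hq : Fintype.card F = q)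
    (hVinh : ∀ P Pl : Finset (Fin 3 → F), (∀ a ∈ Pl, a ≠ (0 : Fin 3 → F)) →
      |((((P ×ˢ Pl).filter fun pa => ∑ i, pa.2 i * pa.1 i = 1).card : ℝ) -
          (P.card : ℝ) * (Pl.card : ℝ) / q)| ≤
        2 * (q : ℝ) * Real.sqrt ((P.card : ℝ) * (Pl.card : ℝ)))
    (U : Finset (Fin 3 → F)) (hU : 8 * (q : ℝ) ^ 2 ≤ (U.card : ℝ)) :
    (((U.filter fun u => 2 * (U.card : ℝ) / q ≤
        ((U.filter fun u' => ∑ i, u i * u' i = 1).card : ℝ)).card : ℝ) ≤ (q : ℝ) ^ 2 / 2) ∧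
      (q : ℝ) ^ 2 / 2 ≤ (U.card : ℝ) / 16 := by
  have hq2 : 2 ≤ q := by rw [← hq]; exact Fintype.one_lt_card
  have hqpos : (0 : ℝ) < q := by
    have : (2 : ℝ) ≤ q := by exact_mod_cast hq2
    linarith
  set L := U.filter fun u => 2 * (U.card : ℝ) / q ≤
      ((U.filter fun u' => ∑ i, u i * u' i = 1).card : ℝ) with hL
  have hUpos : (0 : ℝ) < U.card := by nlinarith
  refine ⟨?_, by nlinarith⟩
  -- all elements of L are nonzero
  have hnz : ∀ a ∈ L, a ≠ (0 : Fin 3 → F) := by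
    intro a ha h0
    rw [hL, Finset.mem_filter] at ha
    rw [h0] at ha
    have hze : (U.filter fun u' => ∑ i, (0 : Fin 3 → F) i * u' i = 1) = ∅ := by
      rw [Finset.filter_eq_empty_iff]
      intro x _
      simp
    rw [hze] at ha
    have h1 : (0 : ℝ) < 2 * (U.card : ℝ) / q := by positivity
    simp only [Finset.card_empty, Nat.cast_zero] at ha
    linarith [ha.2]
  -- incidence count identity
  have hI : (((U ×ˢ L).filter fun pa => ∑ i, pa.2 i * pa.1 i = 1).card)
      = ∑ a ∈ L, (U.filter fun p => ∑ i, a i * p i = 1).card := by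
    rw [Finset.card_filter, Finset.sum_product, Finset.sum_comm]
    exact Finset.sum_congr rfl fun a _ => (Finset.card_filter _ _).symm
  -- lower bound on incidences
  have hlow : (L.card : ℝ) * (2 * (U.card : ℝ) / q) ≤
      (((U ×ˢ L).filter fun pa => ∑ i, pa.2 i * pa.1 i = 1).card : ℝ) := by
    rw [hI]
    push_cast
    calc (L.card : ℝ) * (2 * (U.card : ℝ) / q)
        = ∑ _a ∈ L, 2 * (U.card : ℝ) / q := by
          rw [Finset.sum_const, nsmul_eq_mul]
      _ ≤ ∑ a ∈ L, ((U.filter fun p => ∑ i, a i * p i = 1).card : ℝ) := by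
          refine Finset.sum_le_sum fun a ha => ?_
          rw [hL, Finset.mem_filter] at ha
          exact ha.2
  have hV := hVinh U L hnz
  set I : ℝ := (((U ×ˢ L).filter fun pa => ∑ i, pa.2 i * pa.1 i = 1).card : ℝ) with hIdef
  have habs := abs_le.mp hV
  set s : ℝ := Real.sqrt ((U.card : ℝ) * (L.card : ℝ)) with hs
  have hsnn : 0 ≤ s := Real.sqrt_nonneg _
  have hssq : s ^ 2 = (U.card : ℝ) * (L.card : ℝ) := by
    rw [hs, Real.sq_sqrt]
    positivity
  -- U.card * L.card / q ≤ 2 q s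
  have hkey : (U.card : ℝ) * (L.card : ℝ) / q ≤ 2 * q * s := by
    have h1 : I ≤ (U.card : ℝ) * (L.card : ℝ) / q + 2 * q * s := by linarith [habs.2]
    have h2 : (L.card : ℝ) * (2 * (U.card : ℝ) / q) ≤ I := hlow
    have h3 : (L.card : ℝ) * (2 * (U.card : ℝ) / q)
        = 2 * ((U.card : ℝ) * (L.card : ℝ) / q) := by ring
    linarith
  -- hence s ≤ 2 q^2, so U.card * L.card ≤ 4 q^4
  have hs2 : s ≤ 2 * (q : ℝ) ^ 2 := by
    rcases eq_or_lt_of_le hsnn with h | h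
    · nlinarith
    · have : s ^ 2 / q ≤ 2 * q * s := by rw [hssq]; exact hkey
      rw [div_le_iff₀ hqpos] at this
      nlinarith
  have hprod : (U.card : ℝ) * (L.card : ℝ) ≤ 4 * (q : ℝ) ^ 4 := by
    nlinarith
  have hLnn : (0 : ℝ) ≤ L.card := Nat.cast_nonneg _
  nlinarith [mul_le_mul_of_nonneg_right hU hLnn]
end

section
/- Let U ⊆ F_q^3 with |U| ≥ 8q^2 (assuming Vinh's point-plane incidence bound). Then there exists U₁ ⊆ U with |U₁| ≥ |U|·(1 − 1/16 − 1/4) such that for every u ∈ U₁, the number of u' ∈ U with u·u' = 1 lies between |U|/(2q) and 2|U|/q. -/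
open scoped Classical

set_option maxHeartbeats 1000000

theorem stmt_10 {F : Type*} [Field F] [Fintype F] (q : ℕ) (hq : Fintype.card F = q)
    (hVinh : ∀ P Pl : Finset (Fin 3 → F), (∀ a ∈ Pl, a ≠ (0 : Fin 3 → F)) →
      |((((P ×ˢ Pl).filter fun pa => ∑ i, pa.2 i * pa.1 i = 1).card : ℝ) -
          (P.card : ℝ) * (Pl.card : ℝ) / q)| ≤
        2 * (q : ℝ) * Real.sqrt ((P.card : ℝ) * (Pl.card : ℝ)))
    (U : Finset (Fin 3 → F)) (hU : 8 * (q : ℝ) ^ 2 ≤ (U.card : ℝ)) :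
    ∃ U₁ ⊆ U, (U.card : ℝ) * (1 - 1 / 16 - 1 / 4) ≤ (U₁.card : ℝ) ∧
      ∀ u ∈ U₁,
        (U.card : ℝ) / (2 * q) ≤ ((U.filter fun u' => ∑ i, u i * u' i = 1).card : ℝ) ∧
        ((U.filter fun u' => ∑ i, u i * u' i = 1).card : ℝ) ≤ 2 * (U.card : ℝ) / q := by
  classical
  have hq2 : 2 ≤ q := by rw [← hq]; exact Fintype.one_lt_card
  have hqR : (0:ℝ) < q := by exact_mod_cast Nat.lt_of_lt_of_le Nat.zero_lt_two hq2
  have hqR2 : (2:ℝ) ≤ q := by exact_mod_cast hq2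
  set A : ℝ := (U.card : ℝ) with hA
  have hApos : 0 < A := lt_of_lt_of_le (by positivity) hU
  have hA32 : (32:ℝ) ≤ A := by nlinarith
  set N : (Fin 3 → F) → ℕ := fun u => (U.filter fun u' => ∑ i, u i * u' i = 1).card with hN
  have hI : ∀ Pl : Finset (Fin 3 → F),
      (((U ×ˢ Pl).filter fun pa => ∑ i, pa.2 i * pa.1 i = 1).card : ℝ)
        = ∑ u ∈ Pl, (N u : ℝ) := by
    intro Pl
    have : ((U ×ˢ Pl).filter fun pa => ∑ i, pa.2 i * pa.1 i = 1).card = ∑ u ∈ Pl, N u := by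
      rw [Finset.card_filter, Finset.sum_product, Finset.sum_comm]
      refine Finset.sum_congr rfl fun a _ => ?_
      show _ = (Finset.filter (fun u' => ∑ i, a i * u' i = 1) U).card
      rw [Finset.card_filter]
    rw [this]; push_cast; rfl
  set BL : Finset (Fin 3 → F) :=
    U.filter (fun u => u ≠ 0 ∧ (N u : ℝ) < A / (2*q)) with hBL
  set BH : Finset (Fin 3 → F) :=
    U.filter (fun u => u ≠ 0 ∧ 2*A/q < (N u : ℝ)) with hBH
  -- Bound on BH
  have hBHb : (BH.card : ℝ) ≤ A/16 := by
    have hVB := hVinh U BH (fun a ha => ((Finset.mem_filter.mp ha).2).1)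
    rw [hI BH] at hVB
    set m : ℝ := (BH.card : ℝ) with hm
    have hm0 : (0:ℝ) ≤ m := Nat.cast_nonneg _
    have hsum : 2*A/q * m ≤ ∑ u ∈ BH, (N u : ℝ) := by
      have : ∑ u ∈ BH, (2*A/q) ≤ ∑ u ∈ BH, (N u : ℝ) :=
        Finset.sum_le_sum (fun u hu => le_of_lt (Finset.mem_filter.mp hu).2.2)
      rw [Finset.sum_const, nsmul_eq_mul] at this
      linarith [this]
    set s := Real.sqrt (A * m) with hs
    have hs0 : 0 ≤ s := Real.sqrt_nonneg _
    have hs2 : s^2 = A * m := Real.sq_sqrt (mul_nonneg hApos.le hm0)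
    have habs := abs_le.mp hVB
    have h1 : A*m/q ≤ 2*q*s := by
      have h2 := habs.1
      have h3 : 2*A/q*m - A*m/q = A*m/q := by field_simp; ring
      linarith [h2, hsum]
    have h1' : A*m ≤ 2*(q:ℝ)^2*s := by
      have := (div_le_iff₀ hqR).mp h1
      nlinarith [this]
    have hsle : s ≤ 2*(q:ℝ)^2 := by nlinarith [h1', hs2, hs0]
    have hAm : A*m ≤ 4*q^4 := by nlinarith [hsle, hs0, hs2]
    nlinarith [hAm, hU, hApos, hm0]
  -- Bound on BL
  have hBLb : (BL.card : ℝ) + 1 ≤ A/4 := by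
    rcases Finset.eq_empty_or_nonempty BL with he | hne
    · rw [he]; simp; linarith
    have hVB := hVinh U BL (fun a ha => ((Finset.mem_filter.mp ha).2).1)
    rw [hI BL] at hVB
    set k : ℝ := (BL.card : ℝ) with hk
    have hk0 : (0:ℝ) < k := by
      rw [hk]
      exact_mod_cast Finset.card_pos.mpr hne
    have hsum : ∑ u ∈ BL, (N u : ℝ) < A/(2*q) * k := by
      have : ∑ u ∈ BL, (N u : ℝ) < ∑ u ∈ BL, (A/(2*q)) :=
        Finset.sum_lt_sum_of_nonempty hne (fun u hu => (Finset.mem_filter.mp hu).2.2)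
      rw [Finset.sum_const, nsmul_eq_mul] at this
      linarith [this]
    set s := Real.sqrt (A * k) with hs
    have hs0 : 0 ≤ s := Real.sqrt_nonneg _
    have hs2 : s^2 = A * k := Real.sq_sqrt (mul_nonneg hApos.le hk0.le)
    have hspos : 0 < s := by
      rcases lt_or_eq_of_le hs0 with h | h
      · exact h
      · exfalso; nlinarith
    have habs := abs_le.mp hVB
    have h1 : A*k/(2*q) < 2*q*s := by
      have h2 := habs.2
      have h3 : A*k/q - A/(2*q)*k = A*k/(2*q) := by field_simp; ring
      linarith [h2, hsum]
    have h1' : A*k < 4*(q:ℝ)^2*s := by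
      have := (div_lt_iff₀ (by positivity : (0:ℝ) < 2*q)).mp h1
      nlinarith [this]
    have hslt : s < 4*(q:ℝ)^2 := by nlinarith [h1', hs2, hspos]
    have hAk : A*k < 16*q^4 := by nlinarith [hslt, hs0, hs2]
    have hk2 : k < 2*(q:ℝ)^2 := by nlinarith [hU, hApos]
    -- integrality: k < 2q² gives k + 1 ≤ 2q²
    have hkn : BL.card < 2*q^2 := by
      have : (BL.card : ℝ) < ((2*q^2 : ℕ) : ℝ) := by push_cast; linarith
      exact_mod_cast this
    have hkn1 : (BL.card : ℝ) + 1 ≤ ((2*q^2 : ℕ) : ℝ) := by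
      exact_mod_cast Nat.succ_le_of_lt hkn
    have : ((2*q^2 : ℕ) : ℝ) ≤ A/4 := by push_cast; linarith
    linarith
  -- the bad set
  set Bad : Finset (Fin 3 → F) :=
    U.filter (fun u => ¬(A/(2*q) ≤ (N u : ℝ) ∧ (N u : ℝ) ≤ 2*A/q)) with hBad
  have hsub : Bad ⊆ BL ∪ BH ∪ {0} := by
    intro u hu
    obtain ⟨huU, hcond⟩ := Finset.mem_filter.mp hu
    by_cases h0 : u = 0
    · exact Finset.mem_union_right _ (by simp [h0])
    · rcases not_and_or.mp hcond with h | h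
      · exact Finset.mem_union_left _ (Finset.mem_union_left _
          (Finset.mem_filter.mpr ⟨huU, h0, not_le.mp h⟩))
      · exact Finset.mem_union_left _ (Finset.mem_union_right _
          (Finset.mem_filter.mpr ⟨huU, h0, not_le.mp h⟩))
  have hBadb : (Bad.card : ℝ) ≤ A/4 + A/16 := by
    have h1 : Bad.card ≤ BL.card + BH.card + 1 := by
      have hc0 := Finset.card_le_card hsub
      have hc1 := Finset.card_union_le (BL ∪ BH) ({0} : Finset (Fin 3 → F))
      have hc2 := Finset.card_union_le BL BH
      simp only [Finset.card_singleton] at hc1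
      omega
    have h2 : (Bad.card : ℝ) ≤ (BL.card : ℝ) + (BH.card : ℝ) + 1 := by exact_mod_cast h1
    linarith
  refine ⟨U.filter (fun u => A/(2*q) ≤ (N u : ℝ) ∧ (N u : ℝ) ≤ 2*A/q),
    Finset.filter_subset _ _, ?_, ?_⟩
  · have hsplit := Finset.card_filter_add_card_filter_not
      (s := U) (p := fun u => A/(2*q) ≤ (N u : ℝ) ∧ (N u : ℝ) ≤ 2*A/q)
    have : ((U.filter (fun u => A/(2*q) ≤ (N u : ℝ) ∧ (N u : ℝ) ≤ 2*A/q)).card : ℝ)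
        + (Bad.card : ℝ) = A := by
      rw [hA, ← Nat.cast_add]
      exact congrArg (fun n : ℕ => (n : ℝ)) hsplit
    linarith
  · intro u hu
    have h := (Finset.mem_filter.mp hu).2
    exact ⟨h.1, h.2⟩
end

section
/- Let E, F ⊆ F_q^3 and let T(E,F) = #{(u,v,x) ∈ E × E × F : ||x−u|| = ||x−v|| ≠ 0}. Suppose the number of pairs (e,f) ∈ E×F with ||e−f|| = 0 is at most |E||F|/2. Then |Δ(E,F)| ≥ |E|²|F| / (4·T(E,F)), where Δ(E,F) = {||e−f|| : e ∈ E, f ∈ F}. -/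
open scoped Classical

open Finset in
private lemma stmt14_key {α β : Type*} [DecidableEq α] [DecidableEq β] [Zero β]
    (E Fs : Finset α) (q : α → α → β) (hq : ∀ a b, q a b = q b a) :
    ((((E ×ˢ Fs).filter fun pr => q pr.1 pr.2 ≠ 0).card : ℝ)) ^ 2 ≤
      (((E ×ˢ Fs).image fun pr => q pr.1 pr.2).card : ℝ) * (Fs.card : ℝ) *
        ((((E ×ˢ E) ×ˢ Fs).filter fun t =>
          (q t.2 t.1.1 = q t.2 t.1.2) ∧ q t.2 t.1.1 ≠ 0).card : ℝ) := by
  classical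
  set D : Finset β := (E ×ˢ Fs).image fun pr => q pr.1 pr.2 with hD
  set D' : Finset β := D.filter (· ≠ 0) with hD'
  set f : β × α → ℝ := fun p => ((E.filter fun u => q p.2 u = p.1).card : ℝ) with hf
  have hmem : ∀ u ∈ E, ∀ x ∈ Fs, q x u ≠ 0 → q x u ∈ D' := by
    intro u hu x hx h0
    rw [hD', mem_filter]
    refine ⟨?_, h0⟩
    rw [hD, mem_image]
    exact ⟨(u, x), by simp [mem_product, hu, hx], (hq u x).symm ▸ rfl⟩
  -- N as a sum
  have hN : ((((E ×ˢ Fs).filter fun pr => q pr.1 pr.2 ≠ 0).card : ℝ)) =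
      ∑ p ∈ D' ×ˢ Fs, f p := by
    have hl : ((((E ×ˢ Fs).filter fun pr => q pr.1 pr.2 ≠ 0).card : ℝ)) =
        ∑ x ∈ Fs, ∑ u ∈ E, (if q u x ≠ 0 then (1:ℝ) else 0) := by
      rw [card_filter]
      push_cast
      exact Finset.sum_product_right E Fs fun pr => if q pr.1 pr.2 ≠ 0 then (1:ℝ) else 0
    have hr : ∑ p ∈ D' ×ˢ Fs, f p = ∑ x ∈ Fs, ∑ γ ∈ D', f (γ, x) :=
      Finset.sum_product_right D' Fs f
    rw [hl, hr]
    refine Finset.sum_congr rfl fun x hx => ?_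
    simp only [hf, card_filter]
    push_cast
    rw [Finset.sum_comm]
    refine Finset.sum_congr rfl fun u hu => ?_
    rw [Finset.sum_ite_eq D' (q x u) (fun _ => (1 : ℝ))]
    rw [hq u x]
    by_cases h0 : q x u = 0
    · have hnot : q x u ∉ D' := fun hc => (mem_filter.1 hc).2 h0
      rw [if_neg hnot, if_neg (by simp [h0] : ¬ (q x u ≠ 0))]
    · rw [if_pos (hmem u hu x hx h0), if_pos h0]
  -- T as a sum of squares
  have hT : ((((E ×ˢ E) ×ˢ Fs).filter fun t =>
        (q t.2 t.1.1 = q t.2 t.1.2) ∧ q t.2 t.1.1 ≠ 0).card : ℝ) =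
      ∑ p ∈ D' ×ˢ Fs, f p ^ 2 := by
    have hl : ((((E ×ˢ E) ×ˢ Fs).filter fun t =>
          (q t.2 t.1.1 = q t.2 t.1.2) ∧ q t.2 t.1.1 ≠ 0).card : ℝ) =
        ∑ x ∈ Fs, ∑ u ∈ E, ∑ v ∈ E,
          (if (q x u = q x v) ∧ q x u ≠ 0 then (1:ℝ) else 0) := by
      rw [card_filter]
      push_cast
      rw [Finset.sum_product_right ((E ×ˢ E)) Fs
        (fun t => if (q t.2 t.1.1 = q t.2 t.1.2) ∧ q t.2 t.1.1 ≠ 0 then (1:ℝ) else 0)]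
      exact Finset.sum_congr rfl fun x hx => Finset.sum_product E E _
    have hr : ∑ p ∈ D' ×ˢ Fs, f p ^ 2 = ∑ x ∈ Fs, ∑ γ ∈ D', f (γ, x) ^ 2 :=
      Finset.sum_product_right D' Fs fun p => f p ^ 2
    rw [hl, hr]
    refine Finset.sum_congr rfl fun x hx => ?_
    simp only [hf, card_filter, sq]
    push_cast
    refine Eq.symm ?_
    calc ∑ γ ∈ D', (∑ u ∈ E, if q x u = γ then (1:ℝ) else 0) *
          (∑ v ∈ E, if q x v = γ then (1:ℝ) else 0)
        = ∑ u ∈ E, ∑ v ∈ E, ∑ γ ∈ D',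
            (if q x u = γ then (1:ℝ) else 0) * (if q x v = γ then (1:ℝ) else 0) := by
          simp_rw [Finset.sum_mul, Finset.mul_sum]
          rw [Finset.sum_comm]
          exact Finset.sum_congr rfl fun u _ => Finset.sum_comm
      _ = ∑ u ∈ E, ∑ v ∈ E,
            (if (q x u = q x v) ∧ q x u ≠ 0 then (1:ℝ) else 0) := by
          refine Finset.sum_congr rfl fun u hu => Finset.sum_congr rfl fun v hv => ?_
          have heq : ∀ γ, (if q x u = γ then (1:ℝ) else 0) * (if q x v = γ then (1:ℝ) else 0)
              = if γ = q x u then (if q x v = q x u then (1:ℝ) else 0) else 0 := by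
            intro γ
            rcases eq_or_ne (q x u) γ with h1 | h1
            · subst h1
              simp
            · simp [h1, Ne.symm h1]
          simp_rw [heq]
          rw [Finset.sum_ite_eq' D' (q x u) (fun _ => if q x v = q x u then (1:ℝ) else 0)]
          by_cases h0 : q x u = 0
          · have hnot : q x u ∉ D' := fun hc => (mem_filter.1 hc).2 h0
            rw [if_neg hnot, if_neg (fun hc => hc.2 h0)]
          · rw [if_pos (hmem u hu x hx h0)]
            by_cases h3 : q x v = q x u
            · rw [if_pos h3, if_pos ⟨h3.symm, h0⟩]
            · rw [if_neg h3, if_neg (fun hc => h3 hc.1.symm)]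
  rw [hN, hT]
  calc (∑ p ∈ D' ×ˢ Fs, f p) ^ 2 ≤ (D' ×ˢ Fs).card * ∑ p ∈ D' ×ˢ Fs, f p ^ 2 :=
        sq_sum_le_card_mul_sum_sq
    _ ≤ (D.card : ℝ) * (Fs.card : ℝ) * ∑ p ∈ D' ×ˢ Fs, f p ^ 2 := by
        have h1 : ((D' ×ˢ Fs).card : ℝ) ≤ (D.card : ℝ) * (Fs.card : ℝ) := by
          rw [card_product]
          push_cast
          have := Finset.card_filter_le D (· ≠ 0)
          exact mul_le_mul_of_nonneg_right (by exact_mod_cast this) (by positivity)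
        have h2 : (0:ℝ) ≤ ∑ p ∈ D' ×ˢ Fs, f p ^ 2 :=
          Finset.sum_nonneg fun p _ => sq_nonneg _
        exact mul_le_mul_of_nonneg_right h1 h2

theorem stmt_14 {Fq : Type*} [Field Fq] [Fintype Fq] (E Fs : Finset (Fin 3 → Fq))
    (hzero : (((E ×ˢ Fs).filter fun pr => ∑ i, (pr.1 i - pr.2 i) ^ 2 = 0).card : ℝ) ≤
      (E.card : ℝ) * (Fs.card : ℝ) / 2) :
    ((E.card : ℝ) ^ 2 * (Fs.card : ℝ)) /
        (4 * ((((E ×ˢ E) ×ˢ Fs).filter fun t =>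
          (∑ i, (t.2 i - t.1.1 i) ^ 2 = ∑ i, (t.2 i - t.1.2 i) ^ 2) ∧
            (∑ i, (t.2 i - t.1.1 i) ^ 2 ≠ 0)).card : ℝ)) ≤
      (((E ×ˢ Fs).image fun pr => ∑ i, (pr.1 i - pr.2 i) ^ 2).card : ℝ) := by
  classical
  have hq : ∀ a b : Fin 3 → Fq, ∑ i, (a i - b i) ^ 2 = ∑ i, (b i - a i) ^ 2 :=
    fun a b => Finset.sum_congr rfl fun i _ => by ring
  have key := stmt14_key E Fs (fun a b => ∑ i, (a i - b i) ^ 2) hq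
  set T : ℝ := ((((E ×ˢ E) ×ˢ Fs).filter fun t =>
          (∑ i, (t.2 i - t.1.1 i) ^ 2 = ∑ i, (t.2 i - t.1.2 i) ^ 2) ∧
            (∑ i, (t.2 i - t.1.1 i) ^ 2 ≠ 0)).card : ℝ) with hTdef
  set Dc : ℝ := (((E ×ˢ Fs).image fun pr => ∑ i, (pr.1 i - pr.2 i) ^ 2).card : ℝ) with hDc
  set N : ℝ := (((E ×ˢ Fs).filter fun pr => ∑ i, (pr.1 i - pr.2 i) ^ 2 ≠ 0).card : ℝ) with hNdef
  have key' : N ^ 2 ≤ Dc * (Fs.card : ℝ) * T := key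
  have hsplit : (((E ×ˢ Fs).filter fun pr => ∑ i, (pr.1 i - pr.2 i) ^ 2 = 0).card : ℝ) + N
      = (E.card : ℝ) * (Fs.card : ℝ) := by
    have h := Finset.card_filter_add_card_filter_not
      (s := E ×ˢ Fs) (p := fun pr => ∑ i, (pr.1 i - pr.2 i) ^ 2 = 0)
    rw [Finset.card_product] at h
    rw [hNdef]
    simp only [ne_eq]
    exact_mod_cast h
  have hNlb : (E.card : ℝ) * (Fs.card : ℝ) / 2 ≤ N := by linarith
  have hN0 : (0:ℝ) ≤ N := Nat.cast_nonneg _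
  have hT0 : (0:ℝ) ≤ T := Nat.cast_nonneg _
  have hD0 : (0:ℝ) ≤ Dc := Nat.cast_nonneg _
  have hF0 : (0:ℝ) ≤ (Fs.card : ℝ) := Nat.cast_nonneg _
  have hmain : ((E.card : ℝ) * (Fs.card : ℝ) / 2) ^ 2 ≤ Dc * (Fs.card : ℝ) * T := by
    calc ((E.card : ℝ) * (Fs.card : ℝ) / 2) ^ 2 ≤ N ^ 2 := by
          apply pow_le_pow_left₀ (by positivity) hNlb
      _ ≤ _ := key'
  rcases eq_or_lt_of_le hT0 with hT | hT
  · rw [← hT, mul_zero, div_zero]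
    exact hD0
  rw [div_le_iff₀ (by positivity)]
  rcases eq_or_lt_of_le hF0 with hF | hF
  · rw [← hF]; nlinarith
  · nlinarith [mul_pos hF hT]
end

section
/- Let F ⊆ F_q^3 contain k collinear points u₁, …, u_k on a line ℓ₀, and let E ⊆ F_q^3 be a set not contained in any affine plane. If for every w ∈ E and every nonzero λ ∈ F_q, w·uᵢ = λ holds for at most one index i, or else ℓ₀ lies in the plane {x : w·x = λ}, then |D(E, F)| ≥ k, where D(E,F) = {e·f : e ∈ E, f ∈ F}. -/
open scoped Classical

theorem stmt_17 {Fq : Type*} [Field Fq] [Fintype Fq] (k : ℕ) (E Fs : Finset (Fin 3 → Fq))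
    (u : Fin k → Fin 3 → Fq) (hinj : Function.Injective u) (huF : ∀ i, u i ∈ Fs)
    (p d : Fin 3 → Fq) (hd : d ≠ 0) (hcol : ∀ i, ∃ t : Fq, u i = p + t • d)
    (hE : ∀ (a : Fin 3 → Fq) (c : Fq), a ≠ 0 → ¬ (∀ e ∈ E, ∑ j, a j * e j = c))
    (hcond : ∀ w ∈ E, ∀ lam : Fq, lam ≠ 0 →
      (∀ i j, (∑ m, w m * u i m = lam) → (∑ m, w m * u j m = lam) → i = j) ∨
      (∀ t : Fq, ∑ m, w m * (p + t • d) m = lam)) :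
    k ≤ ((E ×ˢ Fs).image fun pr => ∑ m, pr.1 m * pr.2 m).card := by
  have hE' := hE d 0 hd
  push_neg at hE'
  obtain ⟨w, hwE, hwd⟩ := hE'
  choose t ht using hcol
  have hwd' : (∑ m, w m * d m) ≠ 0 := by
    simpa [mul_comm] using hwd
  have hdot : ∀ i, (∑ m, w m * u i m) = (∑ m, w m * p m) + t i * ∑ m, w m * d m := by
    intro i
    rw [ht i]
    simp [Pi.add_apply, Pi.smul_apply, smul_eq_mul, mul_add, Finset.sum_add_distrib,
      Finset.mul_sum]
    exact Finset.sum_congr rfl fun m _ => by ring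
  have key : Function.Injective fun i => ∑ m, w m * u i m := by
    intro i j hij
    simp only [hdot] at hij
    have hti : t i = t j := by
      have := add_left_cancel hij
      exact mul_right_cancel₀ hwd' this
    apply hinj
    rw [ht i, ht j, hti]
  have hsub : Finset.univ.image (fun i => ∑ m, w m * u i m) ⊆
      ((E ×ˢ Fs).image fun pr => ∑ m, pr.1 m * pr.2 m) := by
    intro x hx
    obtain ⟨i, _, rfl⟩ := Finset.mem_image.mp hx
    exact Finset.mem_image.mpr ⟨(w, u i), Finset.mem_product.mpr ⟨hwE, huF i⟩, rfl⟩
  calc k = (Finset.univ.image (fun i => ∑ m, w m * u i m)).card := by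
        rw [Finset.card_image_of_injective _ key, Finset.card_univ, Fintype.card_fin]
    _ ≤ _ := Finset.card_le_card hsub
end
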